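/- Assume that for all x, y ≥ 2 we have π(x + y) ≤ π(x) + π(y). Then for all a, b ≥ 2, the n-th primes satisfy p_{a+b} ≥ p_a + p_b. -/

import Mathlib

/-!
Write `p = p_a`, `r = p_{a+b}` and suppose `r < p + p_b`. Since `p` and `r` are odd primes,
`r - p ≥ 2`, so subadditivity applies to `r = p + (r - p)` and gives
`a + b = π r ≤ π p + π (r - p) = a + π (r - p)`. Hence `π (r - p) ≥ b`, which is impossible
because `r - p < p_b`.
-/

namespace Nat

open scoped Nat.Prime

theorem primeCounting_nth_prime (n : ℕ) : π (nth Prime n) = n + 1 := by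
  rw [primeCounting_eq_primeCounting'_succ, primeCounting', count_succ, ← primeCounting',
    primeCounting'_nth_eq, if_pos (prime_nth_prime n)]

theorem primeCounting_le_of_lt_nth_prime {x n : ℕ} (h : x < nth Prime n) : π x ≤ n :=
  calc π x = π' (x + 1) := primeCounting_eq_primeCounting'_succ x
    _ ≤ π' (nth Prime n) := monotone_primeCounting' h
    _ = n := primeCounting'_nth_eq n

theorem Prime.two_le_sub {p q : ℕ} (hp : p.Prime) (hq : q.Prime) (hp2 : p ≠ 2) (hpq : p < q) :
    2 ≤ q - p := by
  have hq2 : q ≠ 2 := by have := hp.two_le; omega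
  obtain ⟨k, hk⟩ := Nat.Odd.sub_odd (hq.odd_of_ne_two hq2) (hp.odd_of_ne_two hp2)
  omega

theorem nth_prime_add_nth_prime_le_of_primeCounting_subadditive
    (h : ∀ x y : ℕ, 2 ≤ x → 2 ≤ y → π (x + y) ≤ π x + π y) {m : ℕ} (hm : 0 < m) (n : ℕ) :
    nth Prime m + nth Prime n ≤ nth Prime (m + n + 1) := by
  by_contra! hlt
  have hpr : nth Prime m < nth Prime (m + n + 1) :=
    nth_strictMono infinite_setOfPred_prime (by omega)
  have hgap : 2 ≤ nth Prime (m + n + 1) - nth Prime m :=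
    (prime_nth_prime m).two_le_sub (prime_nth_prime _)
      (by have := add_two_le_nth_prime m; omega) hpr
  have hsub := h _ _ (prime_nth_prime m).two_le hgap
  rw [Nat.add_sub_cancel' hpr.le, primeCounting_nth_prime, primeCounting_nth_prime] at hsub
  have hsmall := primeCounting_le_of_lt_nth_prime (x := nth Prime (m + n + 1) - nth Prime m)
    (n := n) (by omega)
  omega

end Nat

theorem stmt7
    (h : ∀ x y : ℕ, 2 ≤ x → 2 ≤ y →
      Nat.primeCounting (x + y) ≤ Nat.primeCounting x + Nat.primeCounting y) :
    ∀ a b : ℕ, 2 ≤ a → 2 ≤ b →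
      Nat.nth Nat.Prime (a + b - 1) ≥ Nat.nth Nat.Prime (a - 1) + Nat.nth Nat.Prime (b - 1) := by
  intro a b ha hb
  have := Nat.nth_prime_add_nth_prime_le_of_primeCounting_subadditive h (m := a - 1) (by omega)
    (b - 1)
  rwa [show a - 1 + (b - 1) + 1 = a + b - 1 by omega] at this
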